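/- For fixed z > 0, as |ν| → ∞ in a sector with Re ν ≥ 0, the logarithmic derivative of the modified Bessel function of the first kind satisfies I'_ν(z)/I_ν(z) = ν/z + z/(2ν) + O(1/|ν|²). -/

import Mathlib

/-!
Write `w = (z/2)²` and `a_k = 1/(k! (ν+1)(ν+2)⋯(ν+k))`. Since `Γ(ν+k+1) = Γ(ν+1)(ν+1)⋯(ν+k)`,
`I_ν(z) = (z/2)^ν/Γ(ν+1) · F` and `z I'_ν(z) = (z/2)^ν/Γ(ν+1) · (ν F + 2G)` with `F = ∑ a_k w^k`,
`G = ∑ k a_k w^k`, hence `I'_ν/I_ν - ν/z - z/(2ν) = 2 (G - (w/ν) F) / (z F)`.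
The recursion `a_{k+1} = a_k/((k+1)(ν+k+1))` shifts both series by one index:
`F - 1 = w ∑ a_k w^k/((k+1)(ν+k+1))` and `G - (w/ν) F = -(w/ν) ∑ (k+1)/(ν+k+1) · a_k w^k`.
For `Re ν ≥ 0` we have `|ν+k+1| ≥ |ν|` and `(k+1)|a_k| ≤ 2/k!`, so the two right-hand sides are
at most `2|w|e^{|w|}/|ν|` and `2|w|e^{|w|}/|ν|²`: `F → 1` and `G - (w/ν) F = O(1/ν²)`.
-/

open Filter Asymptotics

/-- The modified Bessel function of the first kind. -/
noncomputable def besselI (ν : ℂ) (z : ℝ) : ℂ :=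
  ∑' k : ℕ, ((z : ℂ) / 2) ^ (ν + 2 * (k : ℂ)) /
    ((k.factorial : ℂ) * Complex.Gamma (ν + k + 1))

/-- Derivative of `I_ν` in the argument `z`. -/
noncomputable def besselI' (ν : ℂ) (z : ℝ) : ℂ := deriv (fun t : ℝ => besselI ν t) z

open Complex Finset Bornology Topology
open scoped Nat

variable {ν : ℂ}

theorem hasDerivAt_ofReal_cpow (s : ℂ) {x : ℝ} (hx : 0 < x) :
    HasDerivAt (fun y : ℝ => (y : ℂ) ^ s) (s / x * (x : ℂ) ^ s) x := by
  have hx' : (x : ℂ) ≠ 0 := ofReal_ne_zero.2 hx.ne'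
  refine ((hasDerivAt_id (x : ℂ)).cpow_const (ofReal_mem_slitPlane.2 hx)).comp_ofReal.congr_deriv ?_
  rw [id, cpow_sub _ _ hx', cpow_one]
  field_simp

theorem norm_ofReal_cpow_le {x y : ℝ} (hx : 0 < x) (hxy : x ≤ y) {s : ℂ} (hs : 0 ≤ s.re) :
    ‖(x : ℂ) ^ s‖ ≤ ‖(y : ℂ) ^ s‖ := by
  rw [norm_cpow_eq_rpow_re_of_pos hx, norm_cpow_eq_rpow_re_of_pos (hx.trans_le hxy)]
  exact Real.rpow_le_rpow hx.le hxy hs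

theorem hasDerivAt_tsum_ofReal_cpow_div {s d : ℕ → ℂ} (hs : ∀ k, 0 ≤ (s k).re) {x R : ℝ}
    (hx : 0 < x) (hxR : x < R)
    (hsum : Summable fun k => (1 + ‖s k‖) * ‖(R : ℂ) ^ s k / d k‖) :
    HasDerivAt (fun y : ℝ => ∑' k, (y : ℂ) ^ s k / d k)
      (∑' k, s k / x * ((x : ℂ) ^ s k / d k)) x := by
  have hpos : ∀ y ∈ Set.Ioo (x / 2) R, 0 < y := fun y hy => (half_pos hx).trans hy.1
  have hle : ∀ k, ∀ y ∈ Set.Ioo (x / 2) R, ‖(y : ℂ) ^ s k / d k‖ ≤ ‖(R : ℂ) ^ s k / d k‖ :=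
    fun k y hy => by
      simp only [norm_div]
      gcongr
      exact norm_ofReal_cpow_le (hpos y hy) hy.2.le (hs k)
  have hx_mem : x ∈ Set.Ioo (x / 2) R := ⟨half_lt_self hx, hxR⟩
  refine hasDerivAt_tsum_of_isPreconnected (g := fun k (y : ℝ) => (y : ℂ) ^ s k / d k)
    (g' := fun k (y : ℝ) => s k / y * ((y : ℂ) ^ s k / d k)) (hsum.mul_left (2 / x)) isOpen_Ioo
    isPreconnected_Ioo (fun k y hy => ?_) (fun k y hy => ?_) hx_mem ?_ hx_mem
  · exact ((hasDerivAt_ofReal_cpow (s k) (hpos y hy)).div_const (d k)).congr_deriv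
      (mul_div_assoc _ _ _)
  · have hy0 := hpos y hy
    have hy_inv : y⁻¹ ≤ 2 / x := by
      rw [inv_le_comm₀ hy0 (by positivity), inv_div]
      exact hy.1.le
    calc ‖s k / y * ((y : ℂ) ^ s k / d k)‖ = ‖s k‖ * y⁻¹ * ‖(y : ℂ) ^ s k / d k‖ := by
          rw [norm_mul, norm_div, norm_real, Real.norm_of_nonneg hy0.le, div_eq_mul_inv]
      _ ≤ (1 + ‖s k‖) * (2 / x) * ‖(R : ℂ) ^ s k / d k‖ := by
          gcongr
          · linarith
          · exact hle k y hy
      _ = _ := by ring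
  · exact hsum.of_norm_bounded fun k =>
      (hle k x hx_mem).trans (le_mul_of_one_le_left (norm_nonneg _) (by simp))

theorem Real.hasSum_pow_div_factorial (r : ℝ) : HasSum (fun k : ℕ => r ^ k / k !) (Real.exp r) := by
  simpa [Real.exp_eq_exp_ℝ] using NormedSpace.expSeries_div_hasSum_exp r

noncomputable def besselCoeff (ν : ℂ) (k : ℕ) : ℂ := ((k ! : ℂ) * ∏ j ∈ range k, (ν + j + 1))⁻¹

@[simp] theorem besselCoeff_zero : besselCoeff ν 0 = 1 := by simp [besselCoeff]

theorem besselCoeff_succ (k : ℕ) :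
    besselCoeff ν (k + 1) = besselCoeff ν k / ((k + 1) * (ν + k + 1)) := by
  simp only [besselCoeff, Nat.factorial_succ, prod_range_succ, Nat.cast_mul, mul_inv,
    div_eq_mul_inv]
  push_cast
  ring

noncomputable def besselSeries (ν w : ℂ) : ℂ := ∑' k, besselCoeff ν k * w ^ k

section RePos

variable (hν : 0 ≤ ν.re)
include hν

theorem add_nat_add_one_ne_zero (j : ℕ) : ν + j + 1 ≠ 0 := by
  intro h
  have := congrArg re h
  simp only [add_re, natCast_re, one_re, zero_re] at this
  linarith [j.cast_nonneg (α := ℝ)]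

theorem norm_le_norm_add_nat_add_one (j : ℕ) : ‖ν‖ ≤ ‖ν + j + 1‖ := by
  rw [← sq_le_sq₀ (norm_nonneg _) (norm_nonneg _), Complex.sq_norm, Complex.sq_norm, normSq_apply,
    normSq_apply]
  simp only [add_re, natCast_re, one_re, add_im, natCast_im, one_im, add_zero]
  nlinarith [j.cast_nonneg (α := ℝ)]

theorem nat_add_one_le_norm_add_nat_add_one (j : ℕ) : (j : ℝ) + 1 ≤ ‖ν + j + 1‖ := by
  have := re_le_norm (ν + j + 1)
  simp only [add_re, natCast_re, one_re] at this
  linarith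

theorem factorial_le_norm_prod_add_nat_add_one (k : ℕ) :
    (k ! : ℝ) ≤ ‖∏ j ∈ range k, (ν + j + 1)‖ := by
  rw [norm_prod, ← prod_range_add_one_eq_factorial, Nat.cast_prod]
  exact prod_le_prod (fun j _ => by positivity) fun j _ => by
    simpa using nat_add_one_le_norm_add_nat_add_one hν j

theorem Gamma_add_nat_add_one (k : ℕ) :
    Gamma (ν + k + 1) = Gamma (ν + 1) * ∏ j ∈ range k, (ν + j + 1) := by
  induction k with
  | zero => simp
  | succ k ih =>
    rw [prod_range_succ, ← mul_assoc, ← ih, mul_comm,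
      ← Gamma_add_one _ (add_nat_add_one_ne_zero hν k)]
    push_cast
    ring_nf

theorem succ_mul_norm_besselCoeff_le (k : ℕ) : (k + 1) * ‖besselCoeff ν k‖ ≤ 2 / k ! := by
  have hk : (0 : ℝ) < k ! := by positivity
  have hP := factorial_le_norm_prod_add_nat_add_one hν k
  have hsucc : (k : ℝ) + 1 ≤ 2 * k ! := by
    have : (1 : ℝ) ≤ k ! := by exact_mod_cast k.factorial_pos
    linarith [(by exact_mod_cast Nat.self_le_factorial k : (k : ℝ) ≤ k !)]
  rw [besselCoeff, norm_inv, norm_mul, norm_natCast, ← div_eq_mul_inv,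
    div_le_div_iff₀ (mul_pos hk (hk.trans_le hP)) hk]
  calc ((k : ℝ) + 1) * k ! ≤ 2 * k ! * k ! := by gcongr
    _ ≤ 2 * (k ! * ‖∏ j ∈ range k, (ν + j + 1)‖) := by rw [mul_assoc]; gcongr

theorem succ_mul_norm_besselCoeff_mul_pow_le (w : ℂ) (k : ℕ) :
    (k + 1) * ‖besselCoeff ν k * w ^ k‖ ≤ 2 * (‖w‖ ^ k / k !) := by
  rw [norm_mul, norm_pow, ← mul_assoc, ← mul_div_assoc, mul_div_right_comm]
  gcongr
  exact succ_mul_norm_besselCoeff_le hν k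

theorem summable_succ_mul_norm_besselCoeff_mul_pow (w : ℂ) :
    Summable fun k : ℕ => ((k : ℝ) + 1) * ‖besselCoeff ν k * w ^ k‖ :=
  ((Real.summable_pow_div_factorial ‖w‖).mul_left 2).of_nonneg_of_le (fun _ => by positivity)
    (succ_mul_norm_besselCoeff_mul_pow_le hν w)

theorem summable_besselCoeff_mul_pow (w : ℂ) : Summable fun k => besselCoeff ν k * w ^ k :=
  (summable_succ_mul_norm_besselCoeff_mul_pow hν w).of_norm_bounded fun k =>
    le_mul_of_one_le_left (norm_nonneg _) (by simp)

theorem summable_natCast_mul_besselCoeff_mul_pow (w : ℂ) :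
    Summable fun k : ℕ => (k : ℂ) * (besselCoeff ν k * w ^ k) :=
  (summable_succ_mul_norm_besselCoeff_mul_pow hν w).of_norm_bounded fun k => by
    rw [norm_mul, norm_natCast]
    gcongr
    linarith

theorem cpow_add_two_mul_div_eq {b : ℂ} (hb : b ≠ 0) (k : ℕ) :
    b ^ (ν + 2 * k) / (k ! * Gamma (ν + k + 1)) =
      b ^ ν / Gamma (ν + 1) * (besselCoeff ν k * (b ^ 2) ^ k) := by
  rw [cpow_add _ _ hb, show (2 * k : ℂ) = ((2 * k : ℕ) : ℂ) by push_cast; ring, cpow_natCast,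
    pow_mul, Gamma_add_nat_add_one hν, besselCoeff]
  simp only [div_eq_mul_inv, mul_inv]
  ring

theorem summable_one_add_norm_mul_norm_cpow_div {b : ℂ} (hb : b ≠ 0) :
    Summable fun k : ℕ => (1 + ‖ν + 2 * k‖) * ‖b ^ (ν + 2 * k) / (k ! * Gamma (ν + k + 1))‖ := by
  refine ((summable_succ_mul_norm_besselCoeff_mul_pow hν (b ^ 2)).mul_left
    ((3 + ‖ν‖) * ‖b ^ ν / Gamma (ν + 1)‖)).of_nonneg_of_le (fun _ => by positivity) fun k => ?_
  have hν2k : 1 + ‖ν + 2 * k‖ ≤ (3 + ‖ν‖) * (k + 1) := by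
    have : ‖ν + 2 * k‖ ≤ ‖ν‖ + 2 * k := by
      simpa using norm_add_le ν (2 * k)
    nlinarith [norm_nonneg ν, k.cast_nonneg (α := ℝ)]
  rw [cpow_add_two_mul_div_eq hν hb, norm_mul]
  calc (1 + ‖ν + 2 * k‖) * (‖b ^ ν / Gamma (ν + 1)‖ * ‖besselCoeff ν k * (b ^ 2) ^ k‖)
      ≤ (3 + ‖ν‖) * (k + 1) * (‖b ^ ν / Gamma (ν + 1)‖ * ‖besselCoeff ν k * (b ^ 2) ^ k‖) := by
        gcongr
    _ = _ := by ring

theorem hasDerivAt_besselI {z : ℝ} (hz : 0 < z) :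
    HasDerivAt (fun t : ℝ => besselI ν t)
      (∑' k : ℕ, (ν + 2 * k) / z * (((z : ℂ) / 2) ^ (ν + 2 * k) / (k ! * Gamma (ν + k + 1))))
      z := by
  have hG := hasDerivAt_tsum_ofReal_cpow_div (s := fun k : ℕ => ν + 2 * k)
    (d := fun k : ℕ => k ! * Gamma (ν + k + 1)) (fun k => by
      simp only [add_re, mul_re, re_ofNat, natCast_re, im_ofNat, natCast_im, mul_zero, sub_zero]
      positivity) (half_pos hz)
    (half_lt_self hz) (summable_one_add_norm_mul_norm_cpow_div hν (ofReal_ne_zero.2 hz.ne'))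
  refine ((hG.scomp z ((hasDerivAt_id z).div_const 2)).congr_deriv ?_).congr_of_eventuallyEq
    (Eventually.of_forall fun t => by simp [besselI])
  rw [real_smul, ← tsum_mul_left]
  congr 1
  funext k
  push_cast
  field_simp

theorem besselI_eq_mul_besselSeries {z : ℝ} (hz : z ≠ 0) :
    besselI ν z = ((z : ℂ) / 2) ^ ν / Gamma (ν + 1) * besselSeries ν (((z : ℂ) / 2) ^ 2) := by
  have hb : (z : ℂ) / 2 ≠ 0 := by simpa using hz
  rw [besselI, besselSeries, ← tsum_mul_left]
  exact tsum_congr (cpow_add_two_mul_div_eq hν hb)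

theorem besselI'_eq {z : ℝ} (hz : 0 < z) :
    besselI' ν z = ((z : ℂ) / 2) ^ ν / Gamma (ν + 1) / z *
      (ν * besselSeries ν (((z : ℂ) / 2) ^ 2) +
        2 * ∑' k : ℕ, (k : ℂ) * (besselCoeff ν k * (((z : ℂ) / 2) ^ 2) ^ k)) := by
  have hb : (z : ℂ) / 2 ≠ 0 := by simpa using hz.ne'
  set w := ((z : ℂ) / 2) ^ 2
  have hsum := (((summable_besselCoeff_mul_pow hν w).hasSum.mul_left ν).add
    ((summable_natCast_mul_besselCoeff_mul_pow hν w).hasSum.mul_left 2)).mul_left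
      (((z : ℂ) / 2) ^ ν / Gamma (ν + 1) / z)
  rw [besselI', (hasDerivAt_besselI hν hz).deriv, besselSeries, ← hsum.tsum_eq]
  refine tsum_congr fun k => ?_
  rw [cpow_add_two_mul_div_eq hν hb]
  ring

theorem norm_div_add_nat_add_one_le (hν0 : ν ≠ 0) (c : ℂ) (j : ℕ) :
    ‖c / (ν + j + 1)‖ ≤ ‖c‖ / ‖ν‖ := by
  rw [norm_div]
  exact div_le_div_of_nonneg_left (norm_nonneg c) (norm_pos_iff.2 hν0)
    (norm_le_norm_add_nat_add_one hν j)

theorem besselSeries_sub_one_eq (w : ℂ) :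
    besselSeries ν w - 1 = w * ∑' k : ℕ, besselCoeff ν k * w ^ k / ((k + 1) * (ν + k + 1)) := by
  have h := (hasSum_nat_add_iff' 1).2 (summable_besselCoeff_mul_pow hν w).hasSum
  simp only [range_one, sum_singleton, besselCoeff_zero, pow_zero, mul_one] at h
  rw [besselSeries, ← h.tsum_eq, ← tsum_mul_left]
  refine tsum_congr fun k => ?_
  rw [besselCoeff_succ, pow_succ]
  ring

theorem tsum_natCast_mul_sub_div_mul_besselSeries_eq (hν0 : ν ≠ 0) (w : ℂ) :
    ∑' k : ℕ, (k : ℂ) * (besselCoeff ν k * w ^ k) - w / ν * besselSeries ν w =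
      -(w / ν) * ∑' k : ℕ, (k + 1) / (ν + k + 1) * (besselCoeff ν k * w ^ k) := by
  have h₁ := (hasSum_nat_add_iff' 1).2 (summable_natCast_mul_besselCoeff_mul_pow hν w).hasSum
  simp only [range_one, sum_singleton, CharP.cast_eq_zero, zero_mul, sub_zero] at h₁
  have h := h₁.sub ((summable_besselCoeff_mul_pow hν w).hasSum.mul_left (w / ν))
  rw [besselSeries, ← h.tsum_eq, ← tsum_mul_left]
  refine tsum_congr fun k => ?_
  have := add_nat_add_one_ne_zero hν k
  rw [besselCoeff_succ]
  push_cast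
  field_simp
  ring

theorem norm_besselSeries_sub_one_le (hν0 : ν ≠ 0) (w : ℂ) :
    ‖besselSeries ν w - 1‖ ≤ ‖w‖ * (2 * Real.exp ‖w‖ / ‖ν‖) := by
  rw [besselSeries_sub_one_eq hν, norm_mul]
  gcongr
  refine tsum_of_norm_bounded (((Real.hasSum_pow_div_factorial ‖w‖).mul_left 2).div_const ‖ν‖)
    fun k => ?_
  rw [← div_div]
  refine (norm_div_add_nat_add_one_le hν hν0 _ k).trans ?_
  gcongr
  refine le_trans ?_ (succ_mul_norm_besselCoeff_mul_pow_le hν w k)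
  have hk : (1 : ℝ) ≤ k + 1 := by simp
  rw [norm_div, show ‖(k : ℂ) + 1‖ = k + 1 by norm_cast]
  exact (div_le_self (norm_nonneg _) hk).trans (le_mul_of_one_le_left (norm_nonneg _) hk)

theorem norm_tsum_natCast_mul_sub_div_mul_besselSeries_le (hν0 : ν ≠ 0) (w : ℂ) :
    ‖∑' k : ℕ, (k : ℂ) * (besselCoeff ν k * w ^ k) - w / ν * besselSeries ν w‖ ≤
      ‖w‖ / ‖ν‖ * (2 * Real.exp ‖w‖ / ‖ν‖) := by
  rw [tsum_natCast_mul_sub_div_mul_besselSeries_eq hν hν0, norm_mul, norm_neg, norm_div]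
  gcongr
  refine tsum_of_norm_bounded (((Real.hasSum_pow_div_factorial ‖w‖).mul_left 2).div_const ‖ν‖)
    fun k => ?_
  rw [div_mul_eq_mul_div]
  refine (norm_div_add_nat_add_one_le hν hν0 _ k).trans ?_
  gcongr
  refine le_trans (le_of_eq ?_) (succ_mul_norm_besselCoeff_mul_pow_le hν w k)
  rw [norm_mul]
  norm_cast

theorem besselI'_div_besselI_sub_eq {z : ℝ} (hz : 0 < z) (hν0 : ν ≠ 0)
    (hS : besselSeries ν (((z : ℂ) / 2) ^ 2) ≠ 0) :
    besselI' ν z / besselI ν z - (ν / z + z / (2 * ν)) =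
      2 / z * (∑' k : ℕ, (k : ℂ) * (besselCoeff ν k * (((z : ℂ) / 2) ^ 2) ^ k) -
        ((z : ℂ) / 2) ^ 2 / ν * besselSeries ν (((z : ℂ) / 2) ^ 2)) *
        (besselSeries ν (((z : ℂ) / 2) ^ 2))⁻¹ := by
  have hz' : (z : ℂ) ≠ 0 := ofReal_ne_zero.2 hz.ne'
  have hA : ((z : ℂ) / 2) ^ ν ≠ 0 :=
    (cpow_ne_zero_iff_of_exponent_ne_zero hν0).2 (by simpa using hz')
  have hΓ : Gamma (ν + 1) ≠ 0 := Gamma_ne_zero_of_re_pos (by simp only [add_re, one_re]; linarith)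
  rw [besselI_eq_mul_besselSeries hν hz.ne', besselI'_eq hν hz]
  generalize besselSeries ν (((z : ℂ) / 2) ^ 2) = S at hS ⊢
  field_simp
  ring

end RePos

theorem eventually_re_nonneg_and_ne_zero :
    ∀ᶠ ν in cobounded ℂ ⊓ 𝓟 {ν : ℂ | 0 ≤ ν.re}, 0 ≤ ν.re ∧ ν ≠ 0 :=
  ((eventually_principal.2 fun _ h => h).filter_mono inf_le_right).and
    ((eventually_ne_cobounded 0).filter_mono inf_le_left)

theorem isBigO_besselSeries_sub_one (w : ℂ) :
    (fun ν => besselSeries ν w - 1) =O[cobounded ℂ ⊓ 𝓟 {ν : ℂ | 0 ≤ ν.re}] (fun ν => ν⁻¹) :=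
  .of_bound (‖w‖ * (2 * Real.exp ‖w‖)) <| eventually_re_nonneg_and_ne_zero.mono
    fun ν ⟨hre, hν0⟩ => (norm_besselSeries_sub_one_le hre hν0 w).trans_eq (by
      rw [norm_inv]; ring)

theorem tendsto_besselSeries (w : ℂ) :
    Tendsto (fun ν => besselSeries ν w) (cobounded ℂ ⊓ 𝓟 {ν : ℂ | 0 ≤ ν.re}) (𝓝 1) := by
  simpa using ((isBigO_besselSeries_sub_one w).trans_tendsto
    (tendsto_inv₀_cobounded.mono_left inf_le_left)).add_const 1

theorem isBigO_tsum_natCast_mul_sub_div_mul_besselSeries (w : ℂ) :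
    (fun ν => ∑' k : ℕ, (k : ℂ) * (besselCoeff ν k * w ^ k) - w / ν * besselSeries ν w)
      =O[cobounded ℂ ⊓ 𝓟 {ν : ℂ | 0 ≤ ν.re}] (fun ν => 1 / ν ^ 2) :=
  .of_bound (‖w‖ * (2 * Real.exp ‖w‖)) <| eventually_re_nonneg_and_ne_zero.mono
    fun ν ⟨hre, hν0⟩ => (norm_tsum_natCast_mul_sub_div_mul_besselSeries_le hre hν0 w).trans_eq (by
      rw [norm_div, norm_one, norm_pow]; ring)

/-- For fixed `z > 0`, as `|ν| → ∞` with `Re ν ≥ 0`,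
`I'_ν(z)/I_ν(z) = ν/z + z/(2ν) + O(1/|ν|²)`. -/
theorem besselI_log_deriv_asymptotics (z : ℝ) (hz : 0 < z) :
    (fun ν : ℂ => besselI' ν z / besselI ν z - (ν / z + z / (2 * ν)))
      =O[Filter.comap (fun ν : ℂ => ‖ν‖) Filter.atTop ⊓ 𝓟 {ν : ℂ | 0 ≤ ν.re}]
      (fun ν => 1 / ν ^ 2) := by
  rw [comap_norm_atTop]
  set w : ℂ := ((z : ℂ) / 2) ^ 2
  have hS := tendsto_besselSeries w
  have hkey : ∀ᶠ ν in cobounded ℂ ⊓ 𝓟 {ν : ℂ | 0 ≤ ν.re},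
      besselI' ν z / besselI ν z - (ν / z + z / (2 * ν)) =
        2 / z * (∑' k : ℕ, (k : ℂ) * (besselCoeff ν k * w ^ k) - w / ν * besselSeries ν w) *
          (besselSeries ν w)⁻¹ := by
    filter_upwards [eventually_re_nonneg_and_ne_zero, hS.eventually_ne one_ne_zero]
      with ν ⟨hre, hν0⟩ hS0
    exact besselI'_div_besselI_sub_eq hre hz hν0 hS0
  refine (((isBigO_tsum_natCast_mul_sub_div_mul_besselSeries w).const_mul_left (2 / z)).mul
    ((hS.inv₀ one_ne_zero).isBigO_one ℂ)).congr' (hkey.mono fun _ h => h.symm) (by simp)
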